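/- Let n ≥ 2, let a_0(n), a_1(n) be real numbers with 2a_0(n) + a_1(n) = 1, let f : [0,1] → ℝ be continuous, and let x ∈ [0,1]. Set σ_n(x) = [2n x(1−x) + (1−2x)²](n−1)/(2n²(n+1)), so that σ_n(x) ≤ 1/(4n). Then |U_n^{M,1}(f;x) − f(x)| ≤ |U_n(f;x) − f(x)| + |(1 + a_1(n))(1/2 − x)|·{ 3·ω₂(f; √σ_n(x)) + (5/(n√σ_n(x)))·ω₁(f; √σ_n(x)) }. -/

import Mathlib

open scoped BigOperators
open Set Filter MeasureTheory

/-- Bernstein fundamental function `p_{n,k}` (vanishes for `k > n` since `choose = 0`). -/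
noncomputable def bp (n k : ℕ) (x : ℝ) : ℝ :=
  (n.choose k : ℝ) * x ^ k * (1 - x) ^ (n - k)

/-- Bernstein fundamental function with integer index, vanishing for negative `k`. -/
noncomputable def bpz (n : ℕ) (k : ℤ) (x : ℝ) : ℝ :=
  if 0 ≤ k then bp n k.toNat x else 0

/-- The classical Bernstein operator `B_n`. -/
noncomputable def Bern (n : ℕ) (f : ℝ → ℝ) (x : ℝ) : ℝ :=
  ∑ k ∈ Finset.range (n + 1), bp n k x * f (k / n)

/-- Modified fundamental function `p_{n,k}^{M,1}` with `a(x,n) = a1*x + a0`. -/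
noncomputable def bpM1 (a0 a1 : ℝ) (n k : ℕ) (x : ℝ) : ℝ :=
  (a1 * x + a0) * bp (n - 1) k x + (a1 * (1 - x) + a0) * bpz (n - 1) ((k : ℤ) - 1) x

/-- The modified Bernstein operator `B_n^{M,1}`. -/
noncomputable def BernM1 (a0 a1 : ℝ) (n : ℕ) (f : ℝ → ℝ) (x : ℝ) : ℝ :=
  ∑ k ∈ Finset.range (n + 1), bpM1 a0 a1 n k x * f (k / n)

/-- Second modified fundamental function `p_{n,k}^{M,2}`. -/
noncomputable def bpM2 (n k : ℕ) (x : ℝ) : ℝ :=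
  ((n : ℝ) / 2 * x ^ 2 + (-1 - (n : ℝ) / 2) * x + 1) * bp (n - 2) k x
    + (n : ℝ) * x * (1 - x) * bpz (n - 2) ((k : ℤ) - 1) x
    + ((n : ℝ) / 2 * x ^ 2 + (-(n : ℝ) / 2 + 1) * x) * bpz (n - 2) ((k : ℤ) - 2) x

/-- The second modified Bernstein operator `B_n^{M,2}`. -/
noncomputable def BernM2 (n : ℕ) (f : ℝ → ℝ) (x : ℝ) : ℝ :=
  ∑ k ∈ Finset.range (n + 1), bpM2 n k x * f (k / n)

/-- The Kantorovich operator `K_n`. -/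
noncomputable def Kan (n : ℕ) (f : ℝ → ℝ) (x : ℝ) : ℝ :=
  ((n : ℝ) + 1) * ∑ k ∈ Finset.range (n + 1),
    bp n k x * ∫ t in ((k : ℝ) / (n + 1))..(((k : ℝ) + 1) / (n + 1)), f t

/-- The modified Kantorovich operator `K_n^{M,1}`. -/
noncomputable def KanM1 (a0 a1 : ℝ) (n : ℕ) (f : ℝ → ℝ) (x : ℝ) : ℝ :=
  ((n : ℝ) + 1) * ∑ k ∈ Finset.range (n + 1),
    bpM1 a0 a1 n k x * ∫ t in ((k : ℝ) / (n + 1))..(((k : ℝ) + 1) / (n + 1)), f t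

/-- The Durrmeyer operator `D_n`. -/
noncomputable def Dur (n : ℕ) (f : ℝ → ℝ) (x : ℝ) : ℝ :=
  ((n : ℝ) + 1) * ∑ k ∈ Finset.range (n + 1),
    bp n k x * ∫ t in (0:ℝ)..1, bp n k t * f t

/-- The modified Durrmeyer operator `D_n^{M,1}`. -/
noncomputable def DurM1 (a0 a1 : ℝ) (n : ℕ) (f : ℝ → ℝ) (x : ℝ) : ℝ :=
  ((n : ℝ) + 1) * ∑ k ∈ Finset.range (n + 1),
    bpM1 a0 a1 n k x * ∫ t in (0:ℝ)..1, bp n k t * f t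

/-- The genuine Bernstein–Durrmeyer operator `U_n`. -/
noncomputable def Gen (n : ℕ) (f : ℝ → ℝ) (x : ℝ) : ℝ :=
  (1 - x) ^ n * f 0 + x ^ n * f 1 +
    ((n : ℝ) - 1) * ∑ k ∈ Finset.Icc 1 (n - 1),
      bp n k x * ∫ t in (0:ℝ)..1, bp (n - 2) (k - 1) t * f t

/-- The modified genuine Bernstein–Durrmeyer operator `U_n^{M,1}`. -/
noncomputable def GenM1 (a0 a1 : ℝ) (n : ℕ) (f : ℝ → ℝ) (x : ℝ) : ℝ :=
  (a1 * x + a0) * (1 - x) ^ (n - 1) * f 0 + (a1 * (1 - x) + a0) * x ^ (n - 1) * f 1 +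
    ((n : ℝ) - 1) * ∑ k ∈ Finset.Icc 1 (n - 1),
      bpM1 a0 a1 n k x * ∫ t in (0:ℝ)..1, bp (n - 2) (k - 1) t * f t

/-- First modulus of continuity on `[0,1]`. -/
noncomputable def omega1 (f : ℝ → ℝ) (δ : ℝ) : ℝ :=
  sSup {y | ∃ s t : ℝ, s ∈ Icc (0:ℝ) 1 ∧ t ∈ Icc (0:ℝ) 1 ∧ |s - t| ≤ δ ∧ y = |f s - f t|}

/-- Second modulus of smoothness on `[0,1]`. -/
noncomputable def omega2 (f : ℝ → ℝ) (δ : ℝ) : ℝ :=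
  sSup {y | ∃ t h : ℝ, 0 < h ∧ h ≤ δ ∧ t - h ∈ Icc (0:ℝ) 1 ∧ t + h ∈ Icc (0:ℝ) 1 ∧
    y = |f (t + h) - 2 * f t + f (t - h)|}

/-- Sup norm on `[0,1]`. -/
noncomputable def supNorm (g : ℝ → ℝ) : ℝ :=
  sSup {y | ∃ t ∈ Icc (0:ℝ) 1, y = |g t|}

/-
With `V_k` the coefficients of `U_n` (so `U_n f = ∑ₖ p_{n,k} V_k`), the modified fundamental
functions satisfy `p_{n,k}^{M,1} - p_{n,k} = (1 + a₁)(1/2 - x)(p_{n-1,k-1} - p_{n-1,k})`, and Abel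
summation gives `U_n^{M,1} f - U_n f = (1 + a₁)(1/2 - x) ∑ⱼ p_{n-1,j}(x) (V_{j+1} - V_j)`.
As `p_{n-1,j}' = (n-1)(p_{n-2,j-1} - p_{n-2,j})`, each `V_{j+1} - V_j` is `[w f]₀¹ - ∫ w' f` for
`w = p_{n-1,j}`. Replacing `f` by its piecewise linear interpolant `g` on a mesh of width
`≤ δ = √σ` costs at most `ω₂(δ) ∫ |w'| ≤ 2 ω₂(δ)`, since `|f - g| ≤ ω₂(δ)` (a maximum principle
for second differences); for `g` the expression is `∫ w g'`, at most
`(2/δ) ω₁(δ) ∫ w = 2 ω₁(δ)/(n δ)`.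
-/

lemma bp_eq_eval (n k : ℕ) (x : ℝ) : bp n k x = (bernsteinPolynomial ℝ n k).eval x := by
  simp [bp, bernsteinPolynomial]

@[fun_prop] lemma bp_continuous (n k : ℕ) : Continuous (bp n k) := by
  unfold bp; fun_prop

@[fun_prop] lemma bpz_continuous (n : ℕ) (k : ℤ) : Continuous (bpz n k) := by
  unfold bpz; split
  · exact bp_continuous _ _
  · exact continuous_const

lemma bp_nonneg {n k : ℕ} {x : ℝ} (hx : x ∈ Icc (0:ℝ) 1) : 0 ≤ bp n k x := by
  have h0 := hx.1
  have h1 : 0 ≤ 1 - x := sub_nonneg.2 hx.2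
  unfold bp
  positivity

lemma bpz_nonneg {n : ℕ} {k : ℤ} {x : ℝ} (hx : x ∈ Icc (0:ℝ) 1) : 0 ≤ bpz n k x := by
  unfold bpz; split
  · exact bp_nonneg hx
  · rfl

lemma bp_eq_zero_of_lt {n k : ℕ} (h : n < k) (x : ℝ) : bp n k x = 0 := by
  simp [bp, Nat.choose_eq_zero_of_lt h]

@[simp] lemma bpz_natCast (n k : ℕ) : bpz n k = bp n k := by
  funext x; simp [bpz]

@[simp] lemma bpz_neg_one (n : ℕ) : bpz n (-1) = 0 := by
  funext x; simp [bpz]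

lemma bp_at_zero (n k : ℕ) : bp n k 0 = if k = 0 then 1 else 0 := by
  rw [bp_eq_eval, bernsteinPolynomial.eval_at_0]

lemma bp_at_one (n k : ℕ) : bp n k 1 = if k = n then 1 else 0 := by
  rw [bp_eq_eval, bernsteinPolynomial.eval_at_1]

lemma sum_bp (n : ℕ) (x : ℝ) : ∑ k ∈ Finset.range (n + 1), bp n k x = 1 := by
  simp_rw [bp_eq_eval, ← Polynomial.eval_finsetSum, bernsteinPolynomial.sum, Polynomial.eval_one]

lemma bp_succ_hasDerivAt (n k : ℕ) (t : ℝ) :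
    HasDerivAt (bp (n + 1) k) ((n + 1) * (bpz n ((k : ℤ) - 1) t - bp n k t)) t := by
  rw [show bp (n + 1) k = fun x => (bernsteinPolynomial ℝ (n + 1) k).eval x from
    funext (bp_eq_eval _ _)]
  refine ((bernsteinPolynomial ℝ (n + 1) k).hasDerivAt t).congr_deriv ?_
  rcases k with _ | k
  · simp [bernsteinPolynomial.derivative_zero, ← bp_eq_eval]; ring
  · simp [bernsteinPolynomial.derivative_succ_aux, ← bp_eq_eval]

lemma bp_succ_eq (n k : ℕ) (x : ℝ) :
    bp (n + 1) k x = (1 - x) * bp n k x + x * bpz n ((k : ℤ) - 1) x := by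
  rcases k with _ | k
  · simp [bp, pow_succ, mul_comm]
  · rcases lt_or_ge n k with h | h
    · simp [bp_eq_zero_of_lt h, bp_eq_zero_of_lt (by omega : n < k + 1),
        bp_eq_zero_of_lt (by omega : n + 1 < k + 1)]
    · obtain ⟨d, rfl⟩ := Nat.exists_eq_add_of_le h
      simp only [bp, Nat.choose_succ_succ', Nat.cast_add, push_cast, add_sub_cancel_right,
        bpz_natCast]
      rcases d with _ | d
      · simp [Nat.choose_succ_self]; ring
      · rw [show k + (d + 1) + 1 - (k + 1) = d + 1 by omega,
          show k + (d + 1) - (k + 1) = d by omega, show k + (d + 1) - k = d + 1 by omega]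
        ring

lemma integral_bp_succ_deriv (n k : ℕ) :
    ∫ t in (0:ℝ)..1, (n + 1) * (bpz n ((k : ℤ) - 1) t - bp n k t) =
      bp (n + 1) k 1 - bp (n + 1) k 0 :=
  intervalIntegral.integral_eq_sub_of_hasDerivAt (fun t _ => bp_succ_hasDerivAt n k t)
    ((by fun_prop : Continuous fun t => (n + 1) * (bpz n ((k : ℤ) - 1) t - bp n k t))
      |>.intervalIntegrable _ _)

lemma integral_bp {n k : ℕ} (hk : k ≤ n) : ∫ t in (0:ℝ)..1, bp n k t = 1 / (n + 1) := by
  have hn : (n + 1 : ℝ) ≠ 0 := by positivity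
  induction k with
  | zero =>
    have h := integral_bp_succ_deriv n 0
    simp [bp_at_zero, bp_at_one, intervalIntegral.integral_const_mul] at h
    field_simp
    linarith
  | succ k ih =>
    have h := integral_bp_succ_deriv n (k + 1)
    have hk' : k ≠ n := by omega
    simp only [bp_at_zero, bp_at_one, intervalIntegral.integral_const_mul,
      intervalIntegral.integral_sub ((bpz_continuous _ _).intervalIntegrable _ _)
        ((bp_continuous _ _).intervalIntegrable _ _)] at h
    simp [hk', hn] at h
    rw [← ih (by omega), ← sub_eq_zero.1 h]

lemma integral_bp_le (n k : ℕ) : ∫ t in (0:ℝ)..1, bp n k t ≤ 1 / (n + 1) := by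
  rcases le_or_gt k n with hk | hk
  · exact (integral_bp hk).le
  · simp [bp_eq_zero_of_lt hk]; positivity

lemma integral_bpz_le (n : ℕ) (k : ℤ) : ∫ t in (0:ℝ)..1, bpz n k t ≤ 1 / (n + 1) := by
  unfold bpz
  split
  · exact integral_bp_le n k.toNat
  · simp; positivity

lemma integral_abs_bp_succ_deriv_le (n k : ℕ) :
    ∫ t in (0:ℝ)..1, |(n + 1) * (bpz n ((k : ℤ) - 1) t - bp n k t)| ≤ 2 := by
  have hn : (0 : ℝ) < n + 1 := by positivity
  calc ∫ t in (0:ℝ)..1, |(n + 1) * (bpz n ((k : ℤ) - 1) t - bp n k t)|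
      ≤ ∫ t in (0:ℝ)..1, (n + 1) * (bpz n ((k : ℤ) - 1) t + bp n k t) := by
        refine intervalIntegral.integral_mono_on zero_le_one (Continuous.intervalIntegrable
          (by fun_prop) _ _) (Continuous.intervalIntegrable (by fun_prop) _ _) fun t ht => ?_
        rw [abs_mul, abs_of_pos hn]
        have := bpz_nonneg (n := n) (k := (k : ℤ) - 1) ht
        have := bp_nonneg (n := n) (k := k) ht
        gcongr
        exact abs_sub_le_iff.2 ⟨by linarith, by linarith⟩
    _ = (n + 1) * ((∫ t in (0:ℝ)..1, bpz n ((k : ℤ) - 1) t) + ∫ t in (0:ℝ)..1, bp n k t) := by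
        rw [intervalIntegral.integral_const_mul, intervalIntegral.integral_add
          ((bpz_continuous _ _).intervalIntegrable _ _)
          ((bp_continuous _ _).intervalIntegrable _ _)]
    _ ≤ (n + 1) * (1 / (n + 1) + 1 / (n + 1)) := by
        gcongr
        exacts [integral_bpz_le n _, integral_bp_le n k]
    _ = 2 := by field_simp; ring

section Moduli

variable {f : ℝ → ℝ} {δ : ℝ}

lemma omega1_nonneg : 0 ≤ omega1 f δ :=
  Real.sSup_nonneg fun _ ⟨_, _, _, _, _, hy⟩ => hy ▸ abs_nonneg _

lemma omega2_nonneg : 0 ≤ omega2 f δ :=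
  Real.sSup_nonneg fun _ ⟨_, _, _, _, _, _, hy⟩ => hy ▸ abs_nonneg _

lemma le_omega1 (hf : ContinuousOn f (Icc 0 1)) {s t : ℝ} (hs : s ∈ Icc (0:ℝ) 1)
    (ht : t ∈ Icc (0:ℝ) 1) (hst : |s - t| ≤ δ) : |f s - f t| ≤ omega1 f δ := by
  obtain ⟨M, hM⟩ := isCompact_Icc.exists_bound_of_continuousOn hf
  simp only [Real.norm_eq_abs] at hM
  refine le_csSup ⟨2 * M, ?_⟩ ⟨s, t, hs, ht, hst, rfl⟩
  rintro _ ⟨s, t, hs, ht, -, rfl⟩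
  have := abs_sub (f s) (f t)
  linarith [hM s hs, hM t ht]

lemma le_omega2 (hf : ContinuousOn f (Icc 0 1)) {t h : ℝ} (hh : 0 < h) (hhδ : h ≤ δ)
    (h₁ : t - h ∈ Icc (0:ℝ) 1) (h₂ : t + h ∈ Icc (0:ℝ) 1) :
    |f (t + h) - 2 * f t + f (t - h)| ≤ omega2 f δ := by
  obtain ⟨M, hM⟩ := isCompact_Icc.exists_bound_of_continuousOn hf
  simp only [Real.norm_eq_abs] at hM
  refine le_csSup ⟨4 * M, ?_⟩ ⟨t, h, hh, hhδ, h₁, h₂, rfl⟩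
  rintro _ ⟨t, h, hh, -, h₁, h₂, rfl⟩
  have ht : t ∈ Icc (0:ℝ) 1 := ⟨by linarith [h₁.1], by linarith [h₂.2]⟩
  have := abs_add_three (f (t + h)) (-(2 * f t)) (f (t - h))
  simp only [abs_neg, abs_mul, abs_two, ← sub_eq_add_neg] at this
  linarith [hM _ h₁, hM _ h₂, hM _ ht]

end Moduli

-- At a point where `|φ|` is maximal, reflect through the nearer endpoint.
lemma abs_le_of_abs_second_diff_le {φ : ℝ → ℝ} {a b ε : ℝ} (hφ : ContinuousOn φ (Icc a b))
    (ha : φ a = 0) (hb : φ b = 0) (hε : 0 ≤ ε)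
    (hdiff : ∀ s h, 0 < h → s - h ∈ Icc a b → s + h ∈ Icc a b →
      |φ (s + h) - 2 * φ s + φ (s - h)| ≤ ε)
    {t : ℝ} (ht : t ∈ Icc a b) : |φ t| ≤ ε := by
  obtain ⟨t₀, ht₀, hmax⟩ :=
    isCompact_Icc.exists_isMaxOn ⟨t, ht⟩ (continuous_abs.comp_continuousOn hφ)
  have hmax' : ∀ u ∈ Icc a b, |φ u| ≤ |φ t₀| := fun u hu => hmax hu
  obtain ⟨u, hu, hu₀⟩ : ∃ u ∈ Icc a b, |φ u - 2 * φ t₀| ≤ ε := by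
    rcases le_total t₀ ((a + b) / 2) with hle | hle
    · rcases ht₀.1.eq_or_lt with rfl | hlt
      · exact ⟨a, ht₀, by simp [ha, hε]⟩
      · refine ⟨2 * t₀ - a, ⟨by linarith, by linarith⟩, ?_⟩
        have := hdiff t₀ (t₀ - a) (by linarith) ⟨by linarith, by linarith⟩
          ⟨by linarith, by linarith⟩
        rwa [show t₀ + (t₀ - a) = 2 * t₀ - a by ring, sub_sub_cancel, ha, add_zero] at this
    · rcases ht₀.2.eq_or_lt with rfl | hlt
      · exact ⟨t₀, ht₀, by simp [hb, hε]⟩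
      · refine ⟨2 * t₀ - b, ⟨by linarith, by linarith⟩, ?_⟩
        have := hdiff t₀ (b - t₀) (by linarith) ⟨by linarith, by linarith⟩
          ⟨by linarith, by linarith⟩
        rwa [add_sub_cancel, show t₀ - (b - t₀) = 2 * t₀ - b by ring, hb, zero_sub,
          neg_add_eq_sub] at this
  have := abs_sub_abs_le_abs_sub (2 * φ t₀) (φ u)
  rw [abs_sub_comm, abs_mul, abs_two] at this
  linarith [hmax' t ht, hmax' u hu]

noncomputable def secant (f : ℝ → ℝ) (a b t : ℝ) : ℝ :=
  f a + (f b - f a) / (b - a) * (t - a)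

@[fun_prop] lemma continuous_secant (f : ℝ → ℝ) (a b : ℝ) : Continuous (secant f a b) := by
  unfold secant; fun_prop

lemma secant_left (f : ℝ → ℝ) (a b : ℝ) : secant f a b a = f a := by
  simp [secant]

lemma secant_right (f : ℝ → ℝ) (a b : ℝ) : secant f a b b = f b := by
  rcases eq_or_ne a b with rfl | hab
  · simp [secant]
  · simp [secant, div_mul_cancel₀ _ (sub_ne_zero.2 hab.symm)]

lemma hasDerivAt_secant (f : ℝ → ℝ) (a b t : ℝ) :
    HasDerivAt (secant f a b) ((f b - f a) / (b - a)) t := by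
  unfold secant
  simpa using (((hasDerivAt_id t).sub_const a).const_mul ((f b - f a) / (b - a))).const_add (f a)

lemma abs_sub_secant_le {f : ℝ → ℝ} {a b δ : ℝ} (hf : ContinuousOn f (Icc 0 1)) (ha : 0 ≤ a)
    (hb : b ≤ 1) (hab : b - a ≤ 2 * δ) {t : ℝ} (ht : t ∈ Icc a b) :
    |f t - secant f a b t| ≤ omega2 f δ := by
  have hsub : Icc a b ⊆ Icc 0 1 := Icc_subset_Icc ha hb
  refine abs_le_of_abs_second_diff_le (φ := fun t => f t - secant f a b t)
    ((hf.mono hsub).sub (continuous_secant f a b).continuousOn) (by simp [secant_left])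
    (by simp [secant_right]) omega2_nonneg (fun s h hh h₁ h₂ => ?_) ht
  have hsecant : secant f a b (s + h) - 2 * secant f a b s + secant f a b (s - h) = 0 := by
    simp only [secant]; ring
  have := le_omega2 (δ := δ) hf hh (by linarith [h₁.1, h₂.2]) (hsub h₁) (hsub h₂)
  convert this using 2
  linear_combination -hsecant

section Partition

variable {a : ℕ → ℝ} {N : ℕ}

lemma Icc_piece_subset (ha : Monotone a) (ha0 : a 0 = 0) (haN : a N = 1) {i : ℕ} (hi : i < N) :
    Icc (a i) (a (i + 1)) ⊆ Icc 0 1 :=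
  Icc_subset_Icc (ha0 ▸ ha (Nat.zero_le i)) (haN ▸ ha hi)

lemma sum_integral_pieces (ha : Monotone a) (ha0 : a 0 = 0) (haN : a N = 1) {g : ℝ → ℝ}
    (hg : ContinuousOn g (Icc 0 1)) :
    ∑ i ∈ Finset.range N, ∫ t in a i..a (i + 1), g t = ∫ t in (0:ℝ)..1, g t := by
  rw [intervalIntegral.sum_integral_adjacent_intervals, ha0, haN]
  intro i hi
  refine (hg.mono ?_).intervalIntegrable
  rw [uIcc_of_le (ha i.le_succ)]
  exact Icc_piece_subset ha ha0 haN hi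

end Partition

lemma integral_deriv_mul_secant {f w w' : ℝ → ℝ} (hw : ∀ t, HasDerivAt w (w' t) t)
    (hw' : Continuous w') (a b : ℝ) :
    ∫ t in a..b, (w' t * secant f a b t + w t * ((f b - f a) / (b - a))) =
      w b * f b - w a * f a := by
  have hcont : Continuous w := continuous_iff_continuousAt.2 fun t => (hw t).continuousAt
  rw [intervalIntegral.integral_eq_sub_of_hasDerivAt
    (fun t _ => (hw t).mul (hasDerivAt_secant f a b t))
    ((by fun_prop : Continuous fun t =>
      w' t * secant f a b t + w t * ((f b - f a) / (b - a))).intervalIntegrable _ _)]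
  simp only [Pi.mul_apply, secant_left, secant_right]

-- Integrate by parts against the piecewise linear interpolant of `f` on the partition `a`:
-- the interpolation error costs `ω₂`, the slopes of the interpolant cost `L`.
lemma abs_boundary_sub_integral_le {f w w' : ℝ → ℝ} {a : ℕ → ℝ} {N : ℕ} {δ L : ℝ}
    (hf : ContinuousOn f (Icc 0 1)) (hw : ∀ t, HasDerivAt w (w' t) t) (hw' : Continuous w')
    (ha : StrictMono a) (ha0 : a 0 = 0) (haN : a N = 1)
    (hgap : ∀ i < N, a (i + 1) - a i ≤ 2 * δ)
    (hL : ∀ i < N, |f (a (i + 1)) - f (a i)| ≤ L * (a (i + 1) - a i)) :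
    |w 1 * f 1 - w 0 * f 0 - ∫ t in (0:ℝ)..1, w' t * f t| ≤
      omega2 f δ * (∫ t in (0:ℝ)..1, |w' t|) + L * ∫ t in (0:ℝ)..1, |w t| := by
  have hcont : Continuous w := continuous_iff_continuousAt.2 fun t => (hw t).continuousAt
  have hsub : ∀ i < N, Icc (a i) (a (i + 1)) ⊆ Icc 0 1 :=
    fun i hi => Icc_piece_subset ha.monotone ha0 haN hi
  set s : ℕ → ℝ := fun i => (f (a (i + 1)) - f (a i)) / (a (i + 1) - a i)
  set err : ℕ → ℝ → ℝ := fun i t => w' t * (secant f (a i) (a (i + 1)) t - f t) + w t * s i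
  have hpiece : ∀ i < N, w (a (i + 1)) * f (a (i + 1)) - w (a i) * f (a i)
      - ∫ t in a i..a (i + 1), w' t * f t = ∫ t in a i..a (i + 1), err i t := by
    intro i hi
    have hint : IntervalIntegrable (fun t => w' t * f t) volume (a i) (a (i + 1)) :=
      (hw'.continuousOn.mul (hf.mono (hsub i hi))).intervalIntegrable_of_Icc (ha i.lt_succ_self).le
    rw [← integral_deriv_mul_secant hw hw', ← intervalIntegral.integral_sub
      ((by fun_prop : Continuous fun t => w' t * secant f (a i) (a (i + 1)) t
        + w t * s i).intervalIntegrable _ _) hint]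
    congr 1 with t
    simp only [err]
    ring
  have hmajorant : Continuous fun t => omega2 f δ * |w' t| + L * |w t| := by fun_prop
  have hbound : ∀ i < N, |∫ t in a i..a (i + 1), err i t| ≤
      ∫ t in a i..a (i + 1), (omega2 f δ * |w' t| + L * |w t|) := by
    intro i hi
    have hlt := ha i.lt_succ_self
    rw [← Real.norm_eq_abs]
    refine intervalIntegral.norm_integral_le_of_norm_le hlt.le (ae_of_all _ fun t ht => ?_)
      (hmajorant.intervalIntegrable _ _)
    have hsec := abs_sub_secant_le hf (hsub i hi ⟨le_rfl, hlt.le⟩).1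
      (hsub i hi ⟨hlt.le, le_rfl⟩).2 (hgap i hi) (Ioc_subset_Icc_self ht)
    have hs : |s i| ≤ L := by
      rw [abs_div, abs_of_pos (sub_pos.2 hlt), div_le_iff₀ (sub_pos.2 hlt)]
      exact hL i hi
    calc ‖err i t‖ ≤ |w' t| * |secant f (a i) (a (i + 1)) t - f t| + |w t| * |s i| := by
          simpa only [Real.norm_eq_abs, abs_mul] using
            abs_add_le (w' t * (secant f (a i) (a (i + 1)) t - f t)) (w t * s i)
      _ ≤ omega2 f δ * |w' t| + L * |w t| := by
          rw [abs_sub_comm]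
          nlinarith [abs_nonneg (w' t), abs_nonneg (w t)]
  calc |w 1 * f 1 - w 0 * f 0 - ∫ t in (0:ℝ)..1, w' t * f t|
      = |∑ i ∈ Finset.range N, (w (a (i + 1)) * f (a (i + 1)) - w (a i) * f (a i)
          - ∫ t in a i..a (i + 1), w' t * f t)| := by
        rw [Finset.sum_sub_distrib, Finset.sum_range_sub (fun i => w (a i) * f (a i)),
          sum_integral_pieces ha.monotone ha0 haN (g := fun t => w' t * f t)
            (hw'.continuousOn.mul hf), ha0, haN]
    _ = |∑ i ∈ Finset.range N, ∫ t in a i..a (i + 1), err i t| := by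
        rw [Finset.sum_congr rfl fun i hi => hpiece i (Finset.mem_range.1 hi)]
    _ ≤ ∑ i ∈ Finset.range N, ∫ t in a i..a (i + 1), (omega2 f δ * |w' t| + L * |w t|) :=
        (Finset.abs_sum_le_sum_abs _ _).trans
          (Finset.sum_le_sum fun i hi => hbound i (Finset.mem_range.1 hi))
    _ = omega2 f δ * (∫ t in (0:ℝ)..1, |w' t|) + L * ∫ t in (0:ℝ)..1, |w t| := by
        rw [sum_integral_pieces ha.monotone ha0 haN hmajorant.continuousOn,
          intervalIntegral.integral_add
            ((by fun_prop : Continuous fun t => omega2 f δ * |w' t|).intervalIntegrable _ _)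
            ((by fun_prop : Continuous fun t => L * |w t|).intervalIntegrable _ _),
          intervalIntegral.integral_const_mul, intervalIntegral.integral_const_mul]

lemma exists_nat_one_div_le {h : ℝ} (hh : 0 < h) (h1 : h ≤ 1) :
    ∃ N : ℕ, 0 < N ∧ 1 / (N : ℝ) ≤ h ∧ (N : ℝ) ≤ 2 / h := by
  refine ⟨⌈1 / h⌉₊, Nat.ceil_pos.2 (by positivity), ?_, ?_⟩
  · rw [div_le_iff₀ (Nat.cast_pos.2 (Nat.ceil_pos.2 (by positivity)))]
    have := Nat.le_ceil (1 / h)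
    rw [div_le_iff₀ hh] at this
    linarith
  · have := Nat.ceil_lt_add_one (by positivity : 0 ≤ 1 / h)
    have : 1 ≤ 1 / h := by rw [le_div_iff₀ hh]; linarith
    linarith [show 2 / h = 1 / h + 1 / h by ring]

lemma abs_boundary_sub_integral_le_of_le_one {f w w' : ℝ → ℝ} {δ : ℝ}
    (hf : ContinuousOn f (Icc 0 1)) (hw : ∀ t, HasDerivAt w (w' t) t) (hw' : Continuous w')
    (hδ : 0 < δ) (hδ1 : δ ≤ 1) :
    |w 1 * f 1 - w 0 * f 0 - ∫ t in (0:ℝ)..1, w' t * f t| ≤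
      omega2 f δ * (∫ t in (0:ℝ)..1, |w' t|) + 2 / δ * omega1 f δ * ∫ t in (0:ℝ)..1, |w t| := by
  obtain ⟨N, hN, hNδ, hN2⟩ := exists_nat_one_div_le hδ hδ1
  have hNpos : (0 : ℝ) < N := Nat.cast_pos.2 hN
  have hgap : ∀ i : ℕ, ((i + 1 : ℕ) : ℝ) / N - (i : ℝ) / N = 1 / N := fun i => by
    push_cast; ring
  have hmem : ∀ i < N, ((i : ℕ) : ℝ) / N ∈ Icc (0:ℝ) 1 ∧ ((i + 1 : ℕ) : ℝ) / N ∈ Icc (0:ℝ) 1 :=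
    fun i hi => by
      refine ⟨⟨by positivity, ?_⟩, ⟨by positivity, ?_⟩⟩ <;>
        rw [div_le_one hNpos] <;> exact_mod_cast (by omega)
  refine (abs_boundary_sub_integral_le hf hw hw' (a := fun i => (i : ℝ) / N) (δ := δ)
    (L := N * omega1 f δ)
    (fun i j hij => div_lt_div_of_pos_right (Nat.cast_lt.2 hij) hNpos) (by simp)
    (div_self hNpos.ne') (fun i _ => ?_) (fun i hi => ?_)).trans ?_
  · rw [hgap]; linarith
  · rw [hgap, mul_right_comm, mul_one_div_cancel hNpos.ne', one_mul]
    exact le_omega1 hf (hmem i hi).2 (hmem i hi).1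
      (by rw [hgap, abs_of_pos (by positivity)]; exact hNδ)
  · have : 0 ≤ ∫ t in (0:ℝ)..1, |w t| :=
      intervalIntegral.integral_nonneg zero_le_one fun t _ => abs_nonneg _
    have := omega1_nonneg (f := f) (δ := δ)
    gcongr

-- The coefficients of `U_{m+2} = ∑ₖ p_{m+2,k} · genCoeff f m k`, indexed by `m = n - 2` so that
-- no truncated subtraction occurs.
noncomputable def genCoeff (f : ℝ → ℝ) (m k : ℕ) : ℝ :=
  if k = 0 then f 0 else if k = m + 2 then f 1 else (m + 1) * ∫ t in (0:ℝ)..1, bp m (k - 1) t * f t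

section GenCoeff

variable {f : ℝ → ℝ} {m : ℕ}

lemma genCoeff_succ_sub (hf : ContinuousOn f (Icc 0 1)) {j : ℕ} (hj : j ≤ m + 1) :
    genCoeff f m (j + 1) - genCoeff f m j = bp (m + 1) j 1 * f 1 - bp (m + 1) j 0 * f 0
      - ∫ t in (0:ℝ)..1, (m + 1) * (bpz m ((j : ℤ) - 1) t - bp m j t) * f t := by
  have hint : ∀ g : ℝ → ℝ, Continuous g →
      IntervalIntegrable (fun t => g t * f t) volume (0:ℝ) 1 := fun g hg =>
    (hg.continuousOn.mul hf).intervalIntegrable_of_Icc zero_le_one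
  have hsplit : ∫ t in (0:ℝ)..1, (m + 1) * (bpz m ((j : ℤ) - 1) t - bp m j t) * f t =
      (m + 1) * ((∫ t in (0:ℝ)..1, bpz m ((j : ℤ) - 1) t * f t)
        - ∫ t in (0:ℝ)..1, bp m j t * f t) := by
    rw [← intervalIntegral.integral_sub (hint _ (bpz_continuous _ _)) (hint _ (bp_continuous _ _)),
      ← intervalIntegral.integral_const_mul]
    congr 1 with t
    ring
  rw [hsplit]
  rcases j with _ | i
  · simp [genCoeff, bp_at_zero, bp_at_one]
    ring
  · rcases (Nat.le_of_succ_le_succ hj).eq_or_lt with rfl | hi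
    · simp [genCoeff, bp_at_zero, bp_at_one, bp_eq_zero_of_lt (Nat.lt_succ_self i)]
    · simp [genCoeff, bp_at_zero, bp_at_one, hi.ne]
      rw [if_neg (by omega)]
      ring

lemma abs_genCoeff_succ_sub_le (hf : ContinuousOn f (Icc 0 1)) {j : ℕ} (hj : j ≤ m + 1)
    {δ : ℝ} (hδ : 0 < δ) (hδ1 : δ ≤ 1) :
    |genCoeff f m (j + 1) - genCoeff f m j| ≤ 2 * omega2 f δ + 2 / ((m + 2) * δ) * omega1 f δ := by
  have hw : ∫ t in (0:ℝ)..1, |bp (m + 1) j t| = 1 / (m + 2) := by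
    rw [intervalIntegral.integral_congr (g := bp (m + 1) j) fun t ht =>
      abs_of_nonneg (bp_nonneg (uIcc_of_le (zero_le_one' ℝ) ▸ ht)), integral_bp hj]
    push_cast; ring
  rw [genCoeff_succ_sub hf hj]
  refine (abs_boundary_sub_integral_le_of_le_one hf (bp_succ_hasDerivAt m j) (by fun_prop)
    hδ hδ1).trans ?_
  rw [hw]
  have := mul_le_mul_of_nonneg_left (integral_abs_bp_succ_deriv_le m j)
    (omega2_nonneg (f := f) (δ := δ))
  have : 2 / δ * omega1 f δ * (1 / (m + 2)) = 2 / ((m + 2) * δ) * omega1 f δ := by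
    field_simp
  linarith

lemma sum_mul_genCoeff (P : ℕ → ℝ) :
    ∑ k ∈ Finset.range (m + 3), P k * genCoeff f m k = P 0 * f 0 + P (m + 2) * f 1
      + (m + 1) * ∑ k ∈ Finset.Icc 1 (m + 1), P k * ∫ t in (0:ℝ)..1, bp m (k - 1) t * f t := by
  have hIcc : ∑ k ∈ Finset.Icc 1 (m + 1), P k * ∫ t in (0:ℝ)..1, bp m (k - 1) t * f t =
      ∑ i ∈ Finset.range (m + 1), P (i + 1) * ∫ t in (0:ℝ)..1, bp m i t * f t := by
    have := Finset.sum_Ico_add' (fun k => P k * ∫ t in (0:ℝ)..1, bp m (k - 1) t * f t) 0 (m + 1) 1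
    simp only [add_tsub_cancel_right, zero_add] at this
    rw [Finset.range_eq_Ico, this]
    rfl
  have hmid : ∀ i ∈ Finset.range (m + 1), P (i + 1) * genCoeff f m (i + 1) =
      (m + 1) * (P (i + 1) * ∫ t in (0:ℝ)..1, bp m i t * f t) := by
    intro i hi
    rw [genCoeff, if_neg i.succ_ne_zero, if_neg (by simp at hi; omega), add_tsub_cancel_right]
    ring
  rw [Finset.sum_range_succ, Finset.sum_range_succ', hIcc, Finset.mul_sum,
    Finset.sum_congr rfl hmid]
  simp only [genCoeff, if_pos, if_neg (m + 1).succ_ne_zero]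
  ring

end GenCoeff

lemma bpM1_zero (a0 a1 : ℝ) (n : ℕ) (x : ℝ) :
    bpM1 a0 a1 (n + 1) 0 x = (a1 * x + a0) * (1 - x) ^ n := by
  simp [bpM1, bp]

lemma bpM1_self (a0 a1 : ℝ) (n : ℕ) (x : ℝ) :
    bpM1 a0 a1 (n + 1) (n + 1) x = (a1 * (1 - x) + a0) * x ^ n := by
  simp [bpM1, bp]

lemma Gen_eq_sum_genCoeff (m : ℕ) (f : ℝ → ℝ) (x : ℝ) :
    Gen (m + 2) f x = ∑ k ∈ Finset.range (m + 3), bp (m + 2) k x * genCoeff f m k := by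
  rw [sum_mul_genCoeff]
  simp [Gen, bp, show (m : ℝ) + 2 - 1 = m + 1 by ring]

lemma GenM1_eq_sum_genCoeff (a0 a1 : ℝ) (m : ℕ) (f : ℝ → ℝ) (x : ℝ) :
    GenM1 a0 a1 (m + 2) f x =
      ∑ k ∈ Finset.range (m + 3), bpM1 a0 a1 (m + 2) k x * genCoeff f m k := by
  rw [sum_mul_genCoeff, bpM1_zero, bpM1_self]
  simp [GenM1, show (m : ℝ) + 2 - 1 = m + 1 by ring]

lemma bpM1_sub_bp {a0 a1 : ℝ} (ha : 2 * a0 + a1 = 1) (n k : ℕ) (x : ℝ) :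
    bpM1 a0 a1 (n + 1) k x - bp (n + 1) k x =
      (1 + a1) * (1 / 2 - x) * (bpz n ((k : ℤ) - 1) x - bp n k x) := by
  rw [bpM1, Nat.add_sub_cancel, bp_succ_eq, show a0 = (1 - a1) / 2 by linarith]
  ring

lemma sum_bpz_sub_bp_mul (n : ℕ) (x : ℝ) (V : ℕ → ℝ) :
    ∑ k ∈ Finset.range (n + 2), (bpz n ((k : ℤ) - 1) x - bp n k x) * V k =
      ∑ j ∈ Finset.range (n + 1), bp n j x * (V (j + 1) - V j) := by
  simp only [sub_mul, mul_sub, Finset.sum_sub_distrib]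
  rw [Finset.sum_range_succ' (fun k => bpz n ((k : ℤ) - 1) x * V k),
    Finset.sum_range_succ (fun k => bp n k x * V k)]
  simp [bp_eq_zero_of_lt (Nat.lt_succ_self n)]

lemma GenM1_sub_Gen {a0 a1 : ℝ} (ha : 2 * a0 + a1 = 1) (m : ℕ) (f : ℝ → ℝ) (x : ℝ) :
    GenM1 a0 a1 (m + 2) f x - Gen (m + 2) f x = (1 + a1) * (1 / 2 - x) *
      ∑ j ∈ Finset.range (m + 2), bp (m + 1) j x * (genCoeff f m (j + 1) - genCoeff f m j) := by
  rw [GenM1_eq_sum_genCoeff, Gen_eq_sum_genCoeff, ← Finset.sum_sub_distrib,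
    ← sum_bpz_sub_bp_mul, Finset.mul_sum]
  refine Finset.sum_congr rfl fun k _ => ?_
  rw [← sub_mul, bpM1_sub_bp ha (m + 1), mul_assoc]

lemma abs_sum_bp_mul_le {n : ℕ} {x : ℝ} (hx : x ∈ Icc (0:ℝ) 1) {D : ℕ → ℝ} {K : ℝ}
    (hD : ∀ j ≤ n, |D j| ≤ K) : |∑ j ∈ Finset.range (n + 1), bp n j x * D j| ≤ K := by
  calc |∑ j ∈ Finset.range (n + 1), bp n j x * D j|
      ≤ ∑ j ∈ Finset.range (n + 1), bp n j x * K := by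
        refine (Finset.abs_sum_le_sum_abs _ _).trans (Finset.sum_le_sum fun j hj => ?_)
        rw [abs_mul, abs_of_nonneg (bp_nonneg hx)]
        exact mul_le_mul_of_nonneg_left (hD j (Nat.lt_succ_iff.1 (Finset.mem_range.1 hj)))
          (bp_nonneg hx)
    _ = K := by rw [← Finset.sum_mul, sum_bp, one_mul]

lemma sigma_mem_Ioc {n x : ℝ} (hn : 2 ≤ n) (hx : x ∈ Icc (0:ℝ) 1) :
    (2 * n * x * (1 - x) + (1 - 2 * x) ^ 2) * (n - 1) / (2 * n ^ 2 * (n + 1)) ∈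
      Ioc 0 (1 / (4 * n)) := by
  obtain ⟨hx0, hx1⟩ := hx
  have hX : x * (1 - x) ≤ 1 / 4 := by nlinarith [sq_nonneg (1 - 2 * x)]
  have hpos : 0 < 2 * n * x * (1 - x) + (1 - 2 * x) ^ 2 := by
    nlinarith [mul_nonneg hx0 (sub_nonneg.2 hx1)]
  have hle : 2 * n * x * (1 - x) + (1 - 2 * x) ^ 2 ≤ n / 2 := by nlinarith
  constructor
  · have : 0 < n - 1 := by linarith
    positivity
  · rw [div_le_div_iff₀ (by positivity) (by positivity)]
    nlinarith [mul_le_mul_of_nonneg_right hle (by nlinarith : (0:ℝ) ≤ (n - 1) * (4 * n))]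

/-- pointwise estimate for the modified genuine Bernstein–Durrmeyer
operator `U_n^{M,1}`. -/
theorem stmt16 (n : ℕ) (hn : 2 ≤ n) (a0 a1 : ℝ) (ha : 2 * a0 + a1 = 1)
    (f : ℝ → ℝ) (hf : ContinuousOn f (Icc 0 1)) (x : ℝ) (hx : x ∈ Icc (0:ℝ) 1)
    (σ : ℝ)
    (hσ : σ = (2 * (n : ℝ) * x * (1 - x) + (1 - 2 * x) ^ 2) * ((n : ℝ) - 1) /
      (2 * (n : ℝ) ^ 2 * ((n : ℝ) + 1))) :
    σ ≤ 1 / (4 * (n : ℝ)) ∧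
    |GenM1 a0 a1 n f x - f x| ≤
      |Gen n f x - f x| + |(1 + a1) * (1 / 2 - x)| *
        (3 * omega2 f (Real.sqrt σ)
          + 5 / ((n : ℝ) * Real.sqrt σ) * omega1 f (Real.sqrt σ)) := by
  obtain ⟨hσ0, hσ1⟩ := hσ ▸ sigma_mem_Ioc (Nat.ofNat_le_cast.2 hn) hx
  refine ⟨hσ1, ?_⟩
  obtain ⟨m, rfl⟩ : ∃ m, n = m + 2 := ⟨n - 2, by omega⟩
  push_cast at hσ1 ⊢
  set h := Real.sqrt σ
  have hh : 0 < h := Real.sqrt_pos.2 hσ0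
  have hh1 : h ≤ 1 :=
    Real.sqrt_le_one.2 (hσ1.trans (div_le_one_of_le₀ (by linarith) (by positivity)))
  have hD : ∀ j ≤ m + 1, |genCoeff f m (j + 1) - genCoeff f m j| ≤
      3 * omega2 f h + 5 / ((m + 2) * h) * omega1 f h := fun j hj =>
    (abs_genCoeff_succ_sub_le hf hj hh hh1).trans <| add_le_add
      (by linarith [omega2_nonneg (f := f) (δ := h)])
      (by have := omega1_nonneg (f := f) (δ := h); gcongr; norm_num)
  calc |GenM1 a0 a1 (m + 2) f x - f x|
      ≤ |Gen (m + 2) f x - f x| + |GenM1 a0 a1 (m + 2) f x - Gen (m + 2) f x| :=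
        (abs_sub_le _ _ _).trans_eq (add_comm _ _)
    _ ≤ _ := by
      rw [GenM1_sub_Gen ha, abs_mul]
      gcongr
      exact abs_sum_bp_mul_le hx hD
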